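/- Let d > 0 be an integer that is not a perfect square and satisfies λ(d) = −1. Then there are infinitely many positive integers n such that λ(n² + d) = −1. -/
import Mathlib


/-- The Liouville function: `λ(n) = (-1)^Ω(n)` where `Ω(n)` counts prime factors
of `n` with multiplicity. -/
def liouvilleFun (n : ℕ) : ℤ := (-1) ^ n.primeFactorsList.length

lemma liouvilleFun_mul (a b : ℕ) (ha : a ≠ 0) (hb : b ≠ 0) :
    liouvilleFun (a * b) = liouvilleFun a * liouvilleFun b := by
  unfold liouvilleFun
  rw [← pow_add, (Nat.perm_primeFactorsList_mul ha hb).length_eq, List.length_append]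

lemma liouvilleFun_one_or_neg_one (n : ℕ) :
    liouvilleFun n = 1 ∨ liouvilleFun n = -1 :=
  (Nat.even_or_odd _).imp Even.neg_one_pow Odd.neg_one_pow

lemma liouville_step (d : ℕ) (hd : 0 < d) (m : ℕ)
    (hm : liouvilleFun (m ^ 2 + d) = -1) :
    ∃ m', m < m' ∧ liouvilleFun (m' ^ 2 + d) = -1 := by
  rcases liouvilleFun_one_or_neg_one ((m + 1) ^ 2 + d) with h1 | h1
  · refine ⟨m ^ 2 + m + d, by nlinarith, ?_⟩
    have hid : (m ^ 2 + m + d) ^ 2 + d = (m ^ 2 + d) * ((m + 1) ^ 2 + d) := by ring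
    rw [hid, liouvilleFun_mul _ _ (by positivity) (by positivity), hm, h1]
    ring
  · exact ⟨m + 1, by omega, h1⟩

theorem liouville_neg_infinitely_often_of_liouville_d_neg (d : ℕ) (hd : 0 < d)
    (hsq : ¬ IsSquare d) (hl : liouvilleFun d = -1) :
    {n : ℕ | 0 < n ∧ liouvilleFun (n ^ 2 + d) = -1}.Infinite := by
  have key : ∀ N : ℕ, ∃ m, N < m ∧ liouvilleFun (m ^ 2 + d) = -1 := by
    intro N
    induction N with
    | zero =>
      exact liouville_step d hd 0 (by simpa using hl)
    | succ N ih =>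
      obtain ⟨m, hm, hlm⟩ := ih
      obtain ⟨m', hm', hlm'⟩ := liouville_step d hd m hlm
      exact ⟨m', by omega, hlm'⟩
  intro hfin
  obtain ⟨B, hB⟩ := hfin.bddAbove
  obtain ⟨m, hm, hlm⟩ := key B
  exact absurd (hB ⟨by omega, hlm⟩) (by omega)
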